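/- Let n ≥ 1 and k ∈ {0, 1, …, 2^n + n}. Every ternary decision tree over {0,u,1}^{n+2^n} that outputs the value of the hazard-free extension of MUX_n on every input having at most k coordinates equal to u has depth at least min(2^k + n, 2^n + n), and there exists such a tree of depth exactly min(2^k + n, 2^n + n). -/

import Mathlib

attribute [local instance 0] Classical.propDecidable

/-- Ternary values: `none` represents the uncertain value `u`,
`some b` represents the Boolean value `b`. -/
abbrev TVal := Option Bool

/-- The resolutions of `x ∈ {0,u,1}^ι`: all Boolean strings agreeing with
the determined coordinates of `x`. -/
def Res {ι : Type} (x : ι → Option Bool) : Set (ι → Bool) :=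
  {y | ∀ i b, x i = some b → y i = b}

/-- The hazard-free extension of a Boolean function `f`. -/
noncomputable def hfext {ι : Type} (f : (ι → Bool) → Bool) (x : ι → Option Bool) :
    Option Bool :=
  if ∀ y ∈ Res x, f y = true then some true
  else if ∀ y ∈ Res x, f y = false then some false
  else none

/-- Number of uncertain (`u`) coordinates of `x`. -/
noncomputable def uCount {ι : Type} [Fintype ι] (x : ι → Option Bool) : ℕ :=
  (Finset.univ.filter fun i : ι => x i = none).card

/-- u-sensitivity of `f` at `x`: the number of coordinates `i` such that
changing only coordinate `i` can change the value of the hazard-free extension. -/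
noncomputable def sensAt {ι : Type} [Fintype ι] (f : (ι → Bool) → Bool)
    (x : ι → Option Bool) : ℕ :=
  (Finset.univ.filter fun i : ι => ∃ y : ι → Option Bool,
      y i ≠ x i ∧ (∀ j, j ≠ i → y j = x j) ∧ hfext f y ≠ hfext f x).card

/-- u-sensitivity of `f`. -/
noncomputable def sensU {ι : Type} [Fintype ι] [DecidableEq ι]
    (f : (ι → Bool) → Bool) : ℕ :=
  Finset.univ.sup fun x : ι → Option Bool => sensAt f x

/-- u-sensitivity of `f` restricted to inputs whose hazard-free value is `b`. -/
noncomputable def sensULevel {ι : Type} [Fintype ι] [DecidableEq ι]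
    (f : (ι → Bool) → Bool) (b : Option Bool) : ℕ :=
  (Finset.univ.filter fun x : ι → Option Bool => hfext f x = b).sup (sensAt f)

/-- Boolean sensitivity of `f` at a Boolean input `x`. -/
noncomputable def boolSensAt {ι : Type} [Fintype ι] [DecidableEq ι]
    (f : (ι → Bool) → Bool) (x : ι → Bool) : ℕ :=
  (Finset.univ.filter fun i : ι => f (Function.update x i (!x i)) ≠ f x).card

/-- Boolean sensitivity of `f`. -/
noncomputable def boolSens {ι : Type} [Fintype ι] [DecidableEq ι]
    (f : (ι → Bool) → Bool) : ℕ :=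
  Finset.univ.sup (boolSensAt f)

/-- There are `k` pairwise disjoint blocks, each of which is sensitive for the
hazard-free extension of `f` at `x`. -/
def HasSensBlocks {ι : Type} (f : (ι → Bool) → Bool) (x : ι → Option Bool)
    (k : ℕ) : Prop :=
  ∃ (B : Fin k → Set ι) (y : Fin k → ι → Option Bool),
    (∀ j j', j ≠ j' → Disjoint (B j) (B j')) ∧
    ∀ j, (∀ i, y j i ≠ x i ↔ i ∈ B j) ∧ hfext f (y j) ≠ hfext f x

/-- u-block sensitivity of `f`. -/
noncomputable def bsU {ι : Type} (f : (ι → Bool) → Bool) : ℕ :=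
  sSup {k | ∃ x, HasSensBlocks f x k}

/-- A ternary string `y` is consistent with a partial assignment
`p : ι → Option (Option Bool)` (`none` = `*`). -/
def Consistent {ι : Type} (y : ι → Option Bool) (p : ι → Option (Option Bool)) :
    Prop :=
  ∀ i v, p i = some v → y i = v

/-- `p` is a certificate for the hazard-free extension of `f` at `x`. -/
def IsCert {ι : Type} (f : (ι → Bool) → Bool) (x : ι → Option Bool)
    (p : ι → Option (Option Bool)) : Prop :=
  Consistent x p ∧ ∀ y, Consistent y p → hfext f y = hfext f x

/-- Size of a partial assignment: the number of non-`*` coordinates. -/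
noncomputable def certSize {ι : Type} [Fintype ι] (p : ι → Option (Option Bool)) :
    ℕ :=
  (Finset.univ.filter fun i : ι => p i ≠ none).card

/-- u-certificate complexity of `f` at `x`. -/
noncomputable def ccAt {ι : Type} [Fintype ι] (f : (ι → Bool) → Bool)
    (x : ι → Option Bool) : ℕ :=
  sInf {k | ∃ p, IsCert f x p ∧ certSize p = k}

/-- u-certificate complexity of `f`. -/
noncomputable def ccU {ι : Type} [Fintype ι] [DecidableEq ι]
    (f : (ι → Bool) → Bool) : ℕ :=
  Finset.univ.sup fun x : ι → Option Bool => ccAt f x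

/-- u-certificate complexity of `f` restricted to inputs with hazard-free value `b`. -/
noncomputable def ccULevel {ι : Type} [Fintype ι] [DecidableEq ι]
    (f : (ι → Bool) → Bool) (b : Option Bool) : ℕ :=
  (Finset.univ.filter fun x : ι → Option Bool => hfext f x = b).sup (ccAt f)

/-- A set of literals (at most one per variable), encoded as a partial Boolean
assignment `q : ι → Option Bool`, is an implicant of `f` if `f` is `true` on
every Boolean input extending `q`. -/
def IsImplicant {ι : Type} (f : (ι → Bool) → Bool) (q : ι → Option Bool) : Prop :=
  ∀ y : ι → Bool, (∀ i b, q i = some b → y i = b) → f y = true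

/-- Dually, an implicate of `f` forces the value `false`. -/
def IsImplicate {ι : Type} (f : (ι → Bool) → Bool) (q : ι → Option Bool) : Prop :=
  ∀ y : ι → Bool, (∀ i b, q i = some b → y i = b) → f y = false

/-- `q'` is a (literal-)subset of `q`. -/
def SubAsn {ι : Type} (q' q : ι → Option Bool) : Prop :=
  ∀ i b, q' i = some b → q i = some b

def IsPrimeImplicant {ι : Type} (f : (ι → Bool) → Bool) (q : ι → Option Bool) :
    Prop :=
  IsImplicant f q ∧ ∀ q', SubAsn q' q → q' ≠ q → ¬ IsImplicant f q'

def IsPrimeImplicate {ι : Type} (f : (ι → Bool) → Bool) (q : ι → Option Bool) :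
    Prop :=
  IsImplicate f q ∧ ∀ q', SubAsn q' q → q' ≠ q → ¬ IsImplicate f q'

/-- Number of literals of a partial assignment. -/
noncomputable def asnSize {ι : Type} [Fintype ι] (q : ι → Option Bool) : ℕ :=
  (Finset.univ.filter fun i : ι => q i ≠ none).card

/-- Ternary decision trees: internal nodes query a variable and branch on the
three possible values `0`, `u`, `1`; leaves output a value in `{0,u,1}`. -/
inductive TTree (ι : Type) : Type where
  | leaf : Option Bool → TTree ι
  | node : ι → TTree ι → TTree ι → TTree ι → TTree ι

namespace TTree

def eval {ι : Type} : TTree ι → (ι → Option Bool) → Option Bool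
  | .leaf b, _ => b
  | .node i t0 tu t1, x =>
    match x i with
    | some false => eval t0 x
    | none => eval tu x
    | some true => eval t1 x

def depth {ι : Type} : TTree ι → ℕ
  | .leaf _ => 0
  | .node _ t0 tu t1 => max (max t0.depth tu.depth) t1.depth + 1

/-- Size of a tree: its number of leaves. -/
def size {ι : Type} : TTree ι → ℕ
  | .leaf _ => 1
  | .node _ t0 tu t1 => t0.size + tu.size + t1.size

end TTree

/-- Boolean decision trees. -/
inductive BTree (ι : Type) : Type where
  | leaf : Bool → BTree ι
  | node : ι → BTree ι → BTree ι → BTree ι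

namespace BTree

def eval {ι : Type} : BTree ι → (ι → Bool) → Bool
  | .leaf b, _ => b
  | .node i t0 t1, x => if x i then eval t1 x else eval t0 x

def depth {ι : Type} : BTree ι → ℕ
  | .leaf _ => 0
  | .node _ t0 t1 => max t0.depth t1.depth + 1

/-- Size of a tree: its number of leaves. -/
def size {ι : Type} : BTree ι → ℕ
  | .leaf _ => 1
  | .node _ t0 t1 => t0.size + t1.size

end BTree

/-- Deterministic u-query complexity: minimal depth of a ternary decision tree
computing the hazard-free extension of `f`. -/
noncomputable def Du {ι : Type} (f : (ι → Bool) → Bool) : ℕ :=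
  sInf {d | ∃ T : TTree ι, (∀ x, T.eval x = hfext f x) ∧ T.depth = d}

/-- Minimal number of leaves of a ternary decision tree computing the
hazard-free extension of `f`. -/
noncomputable def sizeU {ι : Type} (f : (ι → Bool) → Bool) : ℕ :=
  sInf {s | ∃ T : TTree ι, (∀ x, T.eval x = hfext f x) ∧ T.size = s}

/-- Deterministic (Boolean) query complexity of `f`. -/
noncomputable def Dbool {ι : Type} (f : (ι → Bool) → Bool) : ℕ :=
  sInf {d | ∃ T : BTree ι, (∀ x, T.eval x = f x) ∧ T.depth = d}

/-- Minimal number of leaves of a Boolean decision tree computing `f`. -/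
noncomputable def sizeBool {ι : Type} (f : (ι → Bool) → Bool) : ℕ :=
  sInf {s | ∃ T : BTree ι, (∀ x, T.eval x = f x) ∧ T.size = s}

/-- Index type for `MUX_n`: `n` selector bits and `2^n` data bits. -/
abbrev MUXIdx (n : ℕ) := Fin n ⊕ (Fin n → Bool)

/-- The multiplexer function: output the data bit addressed by the selector bits. -/
def MUX (n : ℕ) (z : MUXIdx n → Bool) : Bool :=
  z (Sum.inr fun i => z (Sum.inl i))


/-! Lower bound: an adversary answers `u` to the first `min k n` selector queries and Booleans
afterwards, and on the `2 ^ min k n` data bits addressed by the selector values it plays the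
`OR` adversary (`0` until the last of them, which gets `1`). Until all `n` selectors and all
those data bits have been read, two completions of its answers, both with at most `k` entries
`u`, have different hazard-free values. Upper bound: read the selectors, then the data bits at
the at most `2 ^ min k n` addresses they leave possible. -/

open Finset Function

section

variable {ι : Type}

lemma Res.nonempty (x : ι → Option Bool) : (Res x).Nonempty :=
  ⟨fun i => (x i).getD false, fun i b h => by simp [h]⟩

lemma hfext_eq_some_iff (f : (ι → Bool) → Bool) (x : ι → Option Bool) (b : Bool) :
    hfext f x = some b ↔ ∀ y ∈ Res x, f y = b := by
  obtain ⟨y₀, hy₀⟩ := Res.nonempty x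
  unfold hfext
  split_ifs with ht hf <;> cases b <;> grind

lemma card_filter_mem_Res [Fintype ι] [DecidableEq ι] (σ : ι → Option Bool) :
    #{a | a ∈ Res σ} = 2 ^ #{i | σ i = none} := by
  have hpi : ({a | a ∈ Res σ} : Finset (ι → Bool)) =
      Fintype.piFinset fun i => (σ i).elim univ singleton := by
    ext a
    simp only [mem_filter, mem_univ, true_and, Fintype.mem_piFinset]
    refine forall_congr' fun i => ?_
    cases σ i <;> simp
  rw [hpi, Fintype.card_piFinset, ← prod_const, prod_filter]
  refine prod_congr rfl fun i _ => ?_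
  cases σ i <;> simp

lemma card_filter_univ_sum {α β : Type} [Fintype α] [Fintype β] (P : α ⊕ β → Prop)
    [DecidablePred P] : #{i | P i} = #{a | P (Sum.inl a)} + #{b | P (Sum.inr b)} := by
  simp only [card_filter, Fintype.sum_sum_type]

def completeWith (p : ι → Option (Option Bool)) (z : ι → Bool) : ι → Option Bool :=
  fun i => (p i).getD (some (z i))

lemma consistent_completeWith (p : ι → Option (Option Bool)) (z : ι → Bool) :
    Consistent (completeWith p z) p :=
  fun i v h => by simp [completeWith, h]

lemma uCount_completeWith [Fintype ι] (p : ι → Option (Option Bool)) (z : ι → Bool) :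
    uCount (completeWith p z) = #{i | p i = some none} := by
  unfold uCount
  exact congrArg card (filter_congr fun i _ => by cases h : p i <;> simp [completeWith, h])

lemma certSize_update_of_eq_none [Fintype ι] [DecidableEq ι] {p : ι → Option (Option Bool)}
    {i : ι} (hp : p i = none) (v : Option Bool) :
    certSize (update p i (some v)) = certSize p + 1 := by
  unfold certSize
  rw [← card_insert_of_notMem (s := {j | p j ≠ none}) (by simpa using hp)]
  congr 1
  ext j
  by_cases hj : j = i <;> simp [hj]

lemma Consistent.of_update {x : ι → Option Bool} {p : ι → Option (Option Bool)} {i : ι}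
    [DecidableEq ι] {v : Option Bool} (h : Consistent x (update p i (some v)))
    (hp : p i = none) : Consistent x p := by
  intro j w hw
  have hj : j ≠ i := by rintro rfl; simp [hp] at hw
  exact h j w (by rwa [update_of_ne hj])

end

namespace TTree

variable {ι : Type}

def branch (t₀ tᵤ t₁ : TTree ι) : Option Bool → TTree ι
  | some false => t₀
  | none => tᵤ
  | some true => t₁

lemma eval_node (i : ι) (t₀ tᵤ t₁ : TTree ι) (x : ι → Option Bool) :
    (node i t₀ tᵤ t₁).eval x = (branch t₀ tᵤ t₁ (x i)).eval x := by
  rcases h : x i with _ | _ | _ <;> simp [eval, branch, h]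

lemma depth_branch_lt (i : ι) (t₀ tᵤ t₁ : TTree ι) (v : Option Bool) :
    (branch t₀ tᵤ t₁ v).depth < (node i t₀ tᵤ t₁).depth := by
  rcases v with _ | _ | _ <;> simp only [branch, depth] <;> omega

/-- The adversary method: the adversary answers each query so that its partial assignment stays
`Good`, and `g` is not constant on the inputs of `S` consistent with a `Good` assignment of
fewer than `N` coordinates. -/
theorem le_certSize_add_depth [Fintype ι] [DecidableEq ι] {S : Set (ι → Option Bool)}
    {g : (ι → Option Bool) → Option Bool} (Good : (ι → Option (Option Bool)) → Prop) {N : ℕ}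
    (extend : ∀ p, Good p → ∀ i, p i = none → ∃ v, Good (update p i (some v)))
    (determined : ∀ p, Good p →
      (∀ x ∈ S, ∀ y ∈ S, Consistent x p → Consistent y p → g x = g y) → N ≤ certSize p)
    (T : TTree ι) :
    ∀ p, Good p → (∀ x ∈ S, Consistent x p → T.eval x = g x) → N ≤ certSize p + T.depth := by
  induction T with
  | leaf c =>
    intro p hp hT
    have := determined p hp fun x hx y hy hcx hcy => (hT x hx hcx).symm.trans (hT y hy hcy)
    simpa [depth] using this
  | node i t₀ tᵤ t₁ ih₀ ihᵤ ih₁ =>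
    have ih : ∀ v p, Good p → (∀ x ∈ S, Consistent x p → (branch t₀ tᵤ t₁ v).eval x = g x) →
        N ≤ certSize p + (branch t₀ tᵤ t₁ v).depth := by
      rintro (_ | _ | _) <;> assumption
    intro p hp hT
    have hlt := depth_branch_lt i t₀ tᵤ t₁
    rcases hpi : p i with _ | v
    · obtain ⟨v, hv⟩ := extend p hp i hpi
      have := ih v _ hv fun x hx hc => by
        rw [← hT x hx (hc.of_update hpi), eval_node, hc i v (update_self ..)]
      rw [certSize_update_of_eq_none hpi] at this
      have := hlt v
      omega
    · have := ih v p hp fun x hx hc => by rw [← hT x hx hc, eval_node, hc i v hpi]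
      have := hlt v
      omega

def queryAll [DecidableEq ι] :
    List ι → ((ι → Option Bool) → TTree ι) → (ι → Option Bool) → TTree ι
  | [], g, s => g s
  | i :: L, g, s => node i (queryAll L g (update s i (some false)))
      (queryAll L g (update s i none)) (queryAll L g (update s i (some true)))

lemma eval_queryAll [DecidableEq ι] (L : List ι) (g : (ι → Option Bool) → TTree ι)
    (x : ι → Option Bool) (s : ι → Option Bool) :
    ∃ s', (∀ i ∈ L, s' i = x i) ∧ (∀ i ∉ L, s' i = s i) ∧
      (queryAll L g s).eval x = (g s').eval x := by
  induction L generalizing s with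
  | nil => exact ⟨s, by simp, fun _ _ => rfl, rfl⟩
  | cons i L ih =>
    obtain ⟨s', hL, hout, heval⟩ := ih (update s i (x i))
    refine ⟨s', ?_, fun j hj => ?_, ?_⟩
    · intro j hj
      by_cases hjL : j ∈ L
      · exact hL j hjL
      · obtain rfl : j = i := by simpa [hjL] using hj
        rw [hout j hjL, update_self]
    · rw [hout j (fun h => hj (by simp [h])), update_of_ne (fun h => hj (by simp [h]))]
    · rw [queryAll, eval_node, ← heval]
      rcases x i with _ | _ | _ <;> rfl

lemma depth_queryAll_le [DecidableEq ι] (L : List ι) (g : (ι → Option Bool) → TTree ι) {D : ℕ}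
    (hg : ∀ s, (g s).depth ≤ D) : ∀ s, (queryAll L g s).depth ≤ L.length + D := by
  induction L with
  | nil => simpa [queryAll] using hg
  | cons i L ih =>
    intro s
    have h₀ := ih (update s i (some false))
    have hᵤ := ih (update s i none)
    have h₁ := ih (update s i (some true))
    simp only [queryAll, depth, List.length_cons]
    omega

end TTree

namespace MUX

variable {n : ℕ}

lemma forall_mem_Res_eq_iff (x : MUXIdx n → Option Bool) (b : Bool) :
    (∀ y ∈ Res x, MUX n y = b) ↔ ∀ a ∈ Res (x ∘ Sum.inl), x (Sum.inr a) = some b := by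
  constructor
  · intro h a ha
    -- set the unknown data bits to `!b`, so that only a known bit `b` can make the output `b`
    have hy : Sum.elim a (fun a' => (x (Sum.inr a')).getD !b) ∈ Res x := by
      rintro (j | a') c hc
      · exact ha j c hc
      · simp [hc]
    have := h _ hy
    simp only [MUX, Sum.elim_inl, Sum.elim_inr] at this
    cases hx : x (Sum.inr a) <;> simp_all
  · intro h y hy
    exact hy _ b (h (fun j => y (Sum.inl j)) fun j c hc => hy _ c hc)

lemma hfext_eq_some_iff (x : MUXIdx n → Option Bool) (b : Bool) :
    hfext (MUX n) x = some b ↔ ∀ a ∈ Res (x ∘ Sum.inl), x (Sum.inr a) = some b :=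
  (_root_.hfext_eq_some_iff _ x b).trans (forall_mem_Res_eq_iff x b)

lemma hfext_congr {x x' : MUXIdx n → Option Bool} (hsel : ∀ j, x (Sum.inl j) = x' (Sum.inl j))
    (hdata : ∀ a ∈ Res (x ∘ Sum.inl), x (Sum.inr a) = x' (Sum.inr a)) :
    hfext (MUX n) x = hfext (MUX n) x' := by
  have hres : Res (x ∘ Sum.inl) = Res (x' ∘ Sum.inl) := congrArg Res (funext hsel)
  refine Option.ext fun b => ?_
  rw [hfext_eq_some_iff, hfext_eq_some_iff, ← hres]
  exact forall₂_congr fun a ha => by rw [hdata a ha]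

lemma card_selectors_eq_none_le_uCount (x : MUXIdx n → Option Bool) :
    #{j | x (Sum.inl j) = none} ≤ uCount x := by
  unfold uCount
  rw [card_filter_univ_sum]
  exact Nat.le_add_right _ _

/-- Read all selectors, then, if at most `k` of them are `u`, the `2 ^ #u` data bits they leave
possible; on the remaining inputs the output is irrelevant. -/
noncomputable def tree (n k : ℕ) : TTree (MUXIdx n) :=
  TTree.queryAll ((List.finRange n).map Sum.inl) (fun s =>
    if #{j | s (Sum.inl j) = none} ≤ k then
      TTree.queryAll (({a | a ∈ Res (s ∘ Sum.inl)} : Finset _).toList.map Sum.inr)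
        (fun d => .leaf (hfext (MUX n) d)) s
    else .leaf none) fun _ => none

lemma eval_tree {k : ℕ} (x : MUXIdx n → Option Bool) (hx : uCount x ≤ k) :
    (tree n k).eval x = hfext (MUX n) x := by
  obtain ⟨s, hs, -, hevals⟩ := TTree.eval_queryAll ((List.finRange n).map Sum.inl) _ x _
  have hsel : ∀ j, s (Sum.inl j) = x (Sum.inl j) := fun j => hs _ (by simp)
  have hk : #{j | s (Sum.inl j) = none} ≤ k := by
    simpa only [hsel] using (card_selectors_eq_none_le_uCount x).trans hx
  rw [tree, hevals, if_pos hk]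
  obtain ⟨d, hd, hdout, hevald⟩ := TTree.eval_queryAll
    (({a | a ∈ Res (s ∘ Sum.inl)} : Finset _).toList.map Sum.inr) _ x s
  rw [hevald, TTree.eval]
  have hdsel : ∀ j, d (Sum.inl j) = s (Sum.inl j) := fun j => hdout _ (by simp)
  have hres : Res (d ∘ Sum.inl) = Res (s ∘ Sum.inl) := congrArg Res (funext hdsel)
  refine hfext_congr (fun j => by rw [hdsel, hsel]) fun a ha => hd _ ?_
  rw [hres] at ha
  simpa using ha

lemma depth_tree_le (n k : ℕ) : (tree n k).depth ≤ n + 2 ^ min k n := by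
  refine (TTree.depth_queryAll_le _ _ (D := 2 ^ min k n) (fun s => ?_) _).trans (by simp)
  split_ifs with hk
  · refine (TTree.depth_queryAll_le _ _ (D := 0) (fun _ => le_rfl) _).trans ?_
    rw [List.length_map, length_toList, card_filter_mem_Res, add_zero]
    exact Nat.pow_le_pow_right two_pos (le_min hk ((card_le_univ _).trans (by simp)))
  · simp [TTree.depth]

/-- The addresses compatible with the selectors fixed to Booleans by `s`. -/
noncomputable def cone (s : Fin n → Option (Option Bool)) : Finset (Fin n → Bool) :=
  {a | a ∈ Res fun j => (s j).join}

lemma mem_cone {s : Fin n → Option (Option Bool)} {a : Fin n → Bool} :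
    a ∈ cone s ↔ ∀ j b, s j = some (some b) → a j = b := by
  simp [cone, Res, Option.join_eq_some_iff]

noncomputable def uncertain (s : Fin n → Option (Option Bool)) : Finset (Fin n) :=
  {j | s j = some none}

lemma cone_update_none {s : Fin n → Option (Option Bool)} {j : Fin n} (hj : s j = none) :
    cone (update s j (some none)) = cone s := by
  ext a
  simp only [mem_cone]
  refine forall_congr' fun j' => ?_
  by_cases h : j' = j
  · subst h; simp [hj]
  · simp [update_of_ne h]

lemma mem_cone_update_some {s : Fin n → Option (Option Bool)} {j : Fin n} (hj : s j = none)
    (b : Bool) {a : Fin n → Bool} :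
    a ∈ cone (update s j (some (some b))) ↔ a ∈ cone s ∧ a j = b := by
  simp only [mem_cone]
  constructor
  · intro h
    refine ⟨fun j' c hc => h j' c ?_, h j b (by simp)⟩
    rwa [update_of_ne (by rintro rfl; simp [hj] at hc)]
  · rintro ⟨h, rfl⟩ j' c hc
    by_cases hj' : j' = j
    · subst hj'; simpa using hc
    · exact h j' c (by rwa [update_of_ne hj'] at hc)

lemma uncertain_update_none {s : Fin n → Option (Option Bool)} {j : Fin n} :
    uncertain (update s j (some none)) = insert j (uncertain s) := by
  ext j'
  by_cases h : j' = j
  · subst h; simp [uncertain]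
  · simp [uncertain, h]

lemma uncertain_update_some {s : Fin n → Option (Option Bool)} {j : Fin n} (hj : s j = none)
    (b : Bool) : uncertain (update s j (some (some b))) = uncertain s := by
  ext j'
  by_cases h : j' = j
  · subst h; simp [uncertain, hj]
  · simp [uncertain, update_of_ne h]

/-- The selector part of the adversary: it answers `u` while fewer than `m` selectors are
uncertain, and Booleans afterwards. -/
def SelectorInv (m : ℕ) (s : Fin n → Option (Option Bool)) : Prop :=
  #(uncertain s) ≤ m ∧ ((∃ j b, s j = some (some b)) → #(uncertain s) = m)

lemma SelectorInv.update_none {m : ℕ} {s : Fin n → Option (Option Bool)} {j : Fin n}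
    (h : SelectorInv m s) (hlt : #(uncertain s) < m) (hj : s j = none) :
    SelectorInv m (update s j (some none)) := by
  have hcard : #(uncertain (update s j (some none))) = #(uncertain s) + 1 := by
    rw [uncertain_update_none, card_insert_of_notMem (by simp [uncertain, hj])]
  refine ⟨by omega, fun ⟨j', b, hb⟩ => absurd (h.2 ⟨j', b, ?_⟩) hlt.ne⟩
  rwa [update_of_ne (by rintro rfl; simp at hb)] at hb

lemma SelectorInv.update_some {m : ℕ} {s : Fin n → Option (Option Bool)} {j : Fin n}
    (heq : #(uncertain s) = m) (hj : s j = none) (b : Bool) :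
    SelectorInv m (update s j (some (some b))) := by
  rw [SelectorInv, uncertain_update_some hj]
  exact ⟨heq.le, fun _ => heq⟩

lemma SelectorInv.card_uncertain {m : ℕ} {s : Fin n → Option (Option Bool)}
    (h : SelectorInv m s) (hm : m ≤ n) (hs : ∀ j, s j ≠ none) : #(uncertain s) = m := by
  by_cases hb : ∃ j b, s j = some (some b)
  · exact h.2 hb
  · have : uncertain s = univ := by
      refine eq_univ_of_forall fun j => ?_
      rcases hj : s j with _ | _ | b
      · exact absurd hj (hs j)
      · simp [uncertain, hj]
      · exact absurd ⟨j, b, hj⟩ hb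
    have hle := h.1
    rw [this, card_univ, Fintype.card_fin] at hle ⊢
    omega

lemma card_cone {s : Fin n → Option (Option Bool)} (hs : ∀ j, s j ≠ none) :
    #(cone s) = 2 ^ #(uncertain s) := by
  rw [cone, card_filter_mem_Res, uncertain]
  congr 2
  refine filter_congr fun j _ => ?_
  rcases hj : s j with _ | _ | _
  · exact absurd hj (hs j)
  all_goals simp

/-- The data part of the adversary, on the addresses `C` still compatible with the selectors:
it plays the evasiveness adversary for `OR`, answering `0` until the last open address of
`C` is queried, which gets `1`. -/
def DataInv (C : Finset (Fin n → Bool)) (d : (Fin n → Bool) → Option (Option Bool)) : Prop :=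
  (∀ a, d a ≠ some none) ∧
  (((∃ a ∈ C, d a = none) ∧ ∀ a ∈ C, d a ≠ some (some true)) ∨
    ∃ a₀ ∈ C, d a₀ = some (some true) ∧ ∀ a ∈ C, a ≠ a₀ → d a = some (some false))

lemma DataInv.exists_mem_forall_subset {C : Finset (Fin n → Bool)}
    {d : (Fin n → Bool) → Option (Option Bool)} (h : DataInv C d) :
    ∃ w ∈ C, ∀ C' ⊆ C, w ∈ C' → DataInv C' d := by
  obtain ⟨hu, ⟨⟨w, hwC, hw⟩, htrue⟩ | ⟨w, hwC, hw, hfalse⟩⟩ := h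
  · exact ⟨w, hwC, fun C' hC' hwC' =>
      ⟨hu, .inl ⟨⟨w, hwC', hw⟩, fun a ha => htrue a (hC' ha)⟩⟩⟩
  · exact ⟨w, hwC, fun C' hC' hwC' =>
      ⟨hu, .inr ⟨w, hwC', hw, fun a ha => hfalse a (hC' ha)⟩⟩⟩

lemma DataInv.exists_update {C : Finset (Fin n → Bool)}
    {d : (Fin n → Bool) → Option (Option Bool)} (h : DataInv C d) {a : Fin n → Bool}
    (ha : d a = none) : ∃ b, DataInv C (update d a (some (some b))) := by
  have hu' : ∀ b a', update d a (some (some b)) a' ≠ some none := by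
    intro b a'
    by_cases h' : a' = a
    · subst h'; simp
    · rw [update_of_ne h']; exact h.1 a'
  obtain ⟨hu, ⟨⟨w, hwC, hw⟩, htrue⟩ | ⟨a₀, ha₀C, ha₀, hfalse⟩⟩ := h
  · by_cases hopen : ∃ a' ∈ C, a' ≠ a ∧ d a' = none
    · obtain ⟨a', ha'C, ha'a, ha'⟩ := hopen
      refine ⟨false, hu' false, .inl ⟨⟨a', ha'C, by rwa [update_of_ne ha'a]⟩, fun a'' ha''C => ?_⟩⟩
      by_cases h'' : a'' = a
      · subst h''; simp
      · rw [update_of_ne h'']; exact htrue a'' ha''C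
    · by_cases haC : a ∈ C
      · refine ⟨true, hu' true, .inr ⟨a, haC, by simp, fun a' ha'C ha'a => ?_⟩⟩
        rw [update_of_ne ha'a]
        have hne : d a' ≠ none := fun h' => hopen ⟨a', ha'C, ha'a, h'⟩
        rcases hd : d a' with _ | _ | _ | _
        · exact absurd hd hne
        · exact absurd hd (hu a')
        · rfl
        · exact absurd hd (htrue a' ha'C)
      · have hwa : w ≠ a := fun h' => haC (h' ▸ hwC)
        refine ⟨false, hu' false, .inl ⟨⟨w, hwC, by rwa [update_of_ne hwa]⟩, fun a' ha'C => ?_⟩⟩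
        have ha'a : a' ≠ a := fun h' => haC (h' ▸ ha'C)
        rw [update_of_ne ha'a]
        exact htrue a' ha'C
  · have haC : a ∉ C := fun haC => by
      by_cases h' : a = a₀
      · subst h'; simp [ha] at ha₀
      · simp [hfalse a haC h'] at ha
    have hne : ∀ a' ∈ C, a' ≠ a := fun a' ha' h' => haC (h' ▸ ha')
    refine ⟨false, hu' false,
      .inr ⟨a₀, ha₀C, by rwa [update_of_ne (hne a₀ ha₀C)], fun a' ha'C ha'a₀ => ?_⟩⟩
    rw [update_of_ne (hne a' ha'C)]
    exact hfalse a' ha'C ha'a₀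

def AdversaryInv (m : ℕ) (p : MUXIdx n → Option (Option Bool)) : Prop :=
  SelectorInv m (p ∘ Sum.inl) ∧ DataInv (cone (p ∘ Sum.inl)) (p ∘ Sum.inr)

lemma adversaryInv_empty (m : ℕ) : AdversaryInv m (fun _ : MUXIdx n => none) := by
  refine ⟨⟨by simp [uncertain], fun ⟨_, _, h⟩ => by simp at h⟩, fun _ => by simp,
    .inl ⟨⟨fun _ => false, mem_cone.2 fun _ _ h => by simp at h, rfl⟩, fun _ _ => by simp⟩⟩

lemma AdversaryInv.exists_update {m : ℕ} {p : MUXIdx n → Option (Option Bool)}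
    (h : AdversaryInv m p) {i : MUXIdx n} (hi : p i = none) :
    ∃ v, AdversaryInv m (update p i (some v)) := by
  obtain ⟨hsel, hdata⟩ := h
  cases i with
  | inl j =>
    have hl : ∀ v, update p (Sum.inl j) v ∘ Sum.inl = update (p ∘ Sum.inl) j v :=
      update_comp_eq_of_injective _ Sum.inl_injective _
    have hr : ∀ v, update p (Sum.inl j) v ∘ Sum.inr = p ∘ Sum.inr := fun v =>
      funext fun a => update_of_ne Sum.inr_ne_inl _ _
    by_cases hlt : #(uncertain (p ∘ Sum.inl)) < m
    · refine ⟨none, ?_⟩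
      rw [AdversaryInv, hl, hr, cone_update_none hi]
      exact ⟨hsel.update_none hlt hi, hdata⟩
    · obtain ⟨w, hwC, hw⟩ := hdata.exists_mem_forall_subset
      refine ⟨some (w j), ?_⟩
      rw [AdversaryInv, hl, hr]
      exact ⟨SelectorInv.update_some (le_antisymm hsel.1 (not_lt.1 hlt)) hi _,
        hw _ (fun a ha => ((mem_cone_update_some hi _).1 ha).1)
          ((mem_cone_update_some hi _).2 ⟨hwC, rfl⟩)⟩
  | inr a =>
    have hl : ∀ v, update p (Sum.inr a) v ∘ Sum.inl = p ∘ Sum.inl := fun v =>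
      funext fun j => update_of_ne Sum.inl_ne_inr _ _
    have hr : ∀ v, update p (Sum.inr a) v ∘ Sum.inr = update (p ∘ Sum.inr) a v :=
      update_comp_eq_of_injective _ Sum.inr_injective _
    obtain ⟨b, hb⟩ := hdata.exists_update hi
    exact ⟨some b, by rw [AdversaryInv, hl, hr]; exact ⟨hsel, hb⟩⟩

lemma AdversaryInv.uCount_completeWith_le {m : ℕ} {p : MUXIdx n → Option (Option Bool)}
    (h : AdversaryInv m p) (z : MUXIdx n → Bool) : uCount (completeWith p z) ≤ m := by
  have hdata : #{a | p (Sum.inr a) = some none} = 0 :=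
    card_eq_zero.2 (filter_false_of_mem fun a _ => h.2.1 a)
  rw [uCount_completeWith, card_filter_univ_sum, hdata, add_zero]
  exact h.1.1

lemma mem_Res_completeWith {p : MUXIdx n → Option (Option Bool)} {z : MUXIdx n → Bool}
    {a : Fin n → Bool} : a ∈ Res (completeWith p z ∘ Sum.inl) ↔
      a ∈ cone (p ∘ Sum.inl) ∧ ∀ j, p (Sum.inl j) = none → a j = z (Sum.inl j) := by
  constructor
  · intro h
    exact ⟨mem_cone.2 fun j b hb => h j b (by simp [completeWith, show p (Sum.inl j) = _ from hb]),
      fun j hj => h j _ (by simp [completeWith, hj])⟩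
  · rintro ⟨hC, hz⟩ j b hb
    rcases hj : p (Sum.inl j) with _ | _ | c
    all_goals simp only [Function.comp, completeWith, hj, Option.getD_some,
      Option.getD_none, Option.some.injEq, reduceCtorEq] at hb
    · rw [hz j hj, hb]
    · rw [mem_cone.1 hC j c hj, hb]

def IsDetermined (p : MUXIdx n → Option (Option Bool)) : Prop :=
  ∀ z z', hfext (MUX n) (completeWith p z) = hfext (MUX n) (completeWith p z')

lemma not_isDetermined_of_open {p : MUXIdx n → Option (Option Bool)} {w : Fin n → Bool}
    (hw : w ∈ cone (p ∘ Sum.inl)) (hwp : p (Sum.inr w) = none)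
    (hu : ∀ a, p (Sum.inr a) ≠ some none)
    (htrue : ∀ a ∈ cone (p ∘ Sum.inl), p (Sum.inr a) ≠ some (some true)) :
    ¬ IsDetermined p := by
  intro hdet
  have h₀ : hfext (MUX n) (completeWith p (Sum.elim w fun _ => false)) = some false := by
    refine (hfext_eq_some_iff _ _).2 fun a ha => ?_
    have haC := (mem_Res_completeWith.1 ha).1
    rcases hpa : p (Sum.inr a) with _ | _ | _ | _
    · simp [completeWith, hpa]
    · exact absurd hpa (hu a)
    · simp [completeWith, hpa]
    · exact absurd hpa (htrue a haC)
  have h₁ : hfext (MUX n) (completeWith p (Sum.elim w fun a => decide (a = w))) ≠ some false := by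
    rw [Ne, hfext_eq_some_iff]
    intro hall
    have := hall w (mem_Res_completeWith.2 ⟨hw, fun _ _ => rfl⟩)
    simp [completeWith, hwp] at this
  exact h₁ (hdet _ _ ▸ h₀)

/-- Once the cone holds a single `1`, an unread selector can still steer the output to it or
away from it. -/
lemma not_isDetermined_of_eq_none {p : MUXIdx n → Option (Option Bool)} {a₀ : Fin n → Bool}
    (ha₀ : a₀ ∈ cone (p ∘ Sum.inl)) (hpa₀ : p (Sum.inr a₀) = some (some true))
    (hfalse : ∀ a ∈ cone (p ∘ Sum.inl), a ≠ a₀ → p (Sum.inr a) = some (some false))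
    {j₀ : Fin n} (hj₀ : p (Sum.inl j₀) = none) : ¬ IsDetermined p := by
  intro hdet
  have h₀ : hfext (MUX n) (completeWith p (Sum.elim a₀ fun _ => false)) ≠ some false := by
    rw [Ne, hfext_eq_some_iff]
    intro hall
    have := hall a₀ (mem_Res_completeWith.2 ⟨ha₀, fun _ _ => rfl⟩)
    simp [completeWith, hpa₀] at this
  have h₁ : hfext (MUX n)
      (completeWith p (Sum.elim (update a₀ j₀ (!a₀ j₀)) fun _ => false)) = some false := by
    refine (hfext_eq_some_iff _ _).2 fun a ha => ?_
    obtain ⟨haC, hz⟩ := mem_Res_completeWith.1 ha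
    have hne : a ≠ a₀ := fun h => by simpa [h] using hz j₀ hj₀
    simp [completeWith, hfalse a haC hne]
  exact h₀ (hdet _ _ ▸ h₁)

lemma add_card_cone_le_certSize {p : MUXIdx n → Option (Option Bool)}
    (hsel : ∀ j, p (Sum.inl j) ≠ none) (hdata : ∀ a ∈ cone (p ∘ Sum.inl), p (Sum.inr a) ≠ none) :
    n + #(cone (p ∘ Sum.inl)) ≤ certSize p := by
  rw [certSize, card_filter_univ_sum, filter_true_of_mem fun j _ => hsel j, card_univ,
    Fintype.card_fin]
  exact Nat.add_le_add_left (card_le_card fun a ha => by simpa using hdata a ha) n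

lemma AdversaryInv.le_certSize {m : ℕ} {p : MUXIdx n → Option (Option Bool)}
    (h : AdversaryInv m p) (hm : m ≤ n) (hdet : IsDetermined p) : n + 2 ^ m ≤ certSize p := by
  obtain ⟨hsel, hu, ⟨⟨w, hwC, hw⟩, htrue⟩ | ⟨a₀, ha₀C, ha₀, hfalse⟩⟩ := h
  · exact absurd hdet (not_isDetermined_of_open hwC hw hu htrue)
  · by_cases hs : ∃ j, p (Sum.inl j) = none
    · obtain ⟨j₀, hj₀⟩ := hs
      exact absurd hdet (not_isDetermined_of_eq_none ha₀C ha₀ hfalse hj₀)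
    have hsel' : ∀ j, p (Sum.inl j) ≠ none := fun j h => hs ⟨j, h⟩
    have hdata : ∀ a ∈ cone (p ∘ Sum.inl), p (Sum.inr a) ≠ none := fun a ha => by
      by_cases h : a = a₀
      · simp [h, show p (Sum.inr a₀) = _ from ha₀]
      · simp [show p (Sum.inr a) = _ from hfalse a ha h]
    have := add_card_cone_le_certSize hsel' hdata
    rwa [card_cone (s := p ∘ Sum.inl) hsel', hsel.card_uncertain hm hsel'] at this

theorem add_two_pow_le_depth {k : ℕ} (T : TTree (MUXIdx n))
    (hT : ∀ x : MUXIdx n → Option Bool, uCount x ≤ k → T.eval x = hfext (MUX n) x) :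
    n + 2 ^ min k n ≤ T.depth := by
  have := TTree.le_certSize_add_depth (S := {x | uCount x ≤ k}) (AdversaryInv (min k n))
    (fun p hp i hi => hp.exists_update hi)
    (fun p hp hdet => hp.le_certSize (min_le_right k n) fun z z' =>
      hdet _ ((hp.uCount_completeWith_le z).trans (min_le_left k n))
        _ ((hp.uCount_completeWith_le z').trans (min_le_left k n))
        (consistent_completeWith p z) (consistent_completeWith p z'))
    T _ (adversaryInv_empty _) fun x hx _ => hT x hx
  simpa [certSize] using this

end MUX

theorem stmt10_general (n : ℕ) (k : ℕ) :
    (∀ T : TTree (MUXIdx n),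
        (∀ x : MUXIdx n → Option Bool, uCount x ≤ k → T.eval x = hfext (MUX n) x) →
        min (2^k + n) (2^n + n) ≤ T.depth) ∧
    (∃ T : TTree (MUXIdx n),
        (∀ x : MUXIdx n → Option Bool, uCount x ≤ k → T.eval x = hfext (MUX n) x) ∧
        T.depth = min (2^k + n) (2^n + n)) := by
  have hmin : min (2 ^ k + n) (2 ^ n + n) = n + 2 ^ min k n := by
    rw [← Monotone.map_min fun a b (h : a ≤ b) => Nat.add_le_add_right
      (Nat.pow_le_pow_right two_pos h) n, add_comm]
  rw [hmin]
  exact ⟨fun T hT => MUX.add_two_pow_le_depth T hT, MUX.tree n k, MUX.eval_tree,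
    le_antisymm (MUX.depth_tree_le n k) (MUX.add_two_pow_le_depth _ MUX.eval_tree)⟩

/-- Optimal depth for computing the hazard-free extension of `MUX_n` on inputs
with at most `k` uncertain coordinates is exactly `min (2^k + n) (2^n + n)`. -/
theorem stmt10 (n : ℕ) (hn : 1 ≤ n) (k : ℕ) (hk : k ≤ 2^n + n) :
    (∀ T : TTree (MUXIdx n),
        (∀ x : MUXIdx n → Option Bool, uCount x ≤ k → T.eval x = hfext (MUX n) x) →
        min (2^k + n) (2^n + n) ≤ T.depth) ∧
    (∃ T : TTree (MUXIdx n),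
        (∀ x : MUXIdx n → Option Bool, uCount x ≤ k → T.eval x = hfext (MUX n) x) ∧
        T.depth = min (2^k + n) (2^n + n)) :=
  stmt10_general n k
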